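/- arXiv:1202.2277 — 3 statements merged into one kernel-verified Lean document; each statement's English description precedes it below -/
import Mathlib

section
/- Let F be a probability measure supported in (-∞,1] with finite mean, assume E(F) ≤ μ < 1, let ν* ∈ [0, 1/(1−μ)] satisfy ∫ 1/(1−(x−μ)ν*) dF(x) ≤ 1, and set Y = 1−(X−μ)ν* where X has distribution F (so Y > 0 F-almost surely). Then E[Y^λ] ≤ 1 for every λ ∈ [−1,0], and E[Y^λ] ≤ (1−E(F))/(1−μ) for every λ ∈ (0,1]. -/
open MeasureTheory ProbabilityTheory Set Filter
open scoped ENNReal NNReal Classical BoundedContinuousFunction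

noncomputable section

/-- Kullback–Leibler divergence `D(F‖G)` between measures on ℝ
(`+∞` unless `F ≪ G` and `log (dF/dG)` is `F`-integrable). -/
def KL (F G : Measure ℝ) : ℝ≥0∞ :=
  if F ≪ G ∧ Integrable (fun x => Real.log (F.rnDeriv G x).toReal) F
  then ENNReal.ofReal (∫ x, Real.log (F.rnDeriv G x).toReal ∂F) else ⊤

/-- `D_inf(F,μ;𝒜)`: infimum of `D(F‖G)` over probability measures `G` supported in
`(-∞,1]` with (finite) mean `E(G) > μ`.  (For `G` supported in `(-∞,1]` the mean is
well defined in `[-∞,1]`, and `E(G) > μ` holds iff `G` has integrable identity with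
`∫ x dG > μ`.) -/
def DinfSemi (F : Measure ℝ) (μ : ℝ) : ℝ≥0∞ :=
  ⨅ G ∈ {G : Measure ℝ | IsProbabilityMeasure G ∧ G (Set.Ioi 1) = 0 ∧
      Integrable (fun x : ℝ => x) G ∧ μ < ∫ x, x ∂G}, KL F G

/-- `D_inf(F,μ;𝒜_a)`: infimum of `D(F‖G)` over probability measures `G` supported in
`[a,1]` with mean `E(G) > μ`. -/
def DinfBdd (a : ℝ) (F : Measure ℝ) (μ : ℝ) : ℝ≥0∞ :=
  ⨅ G ∈ {G : Measure ℝ | IsProbabilityMeasure G ∧ G (Set.Icc a 1) = 1 ∧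
      μ < ∫ x, x ∂G}, KL F G

/-- `L(ν;F,μ) = ∫ log(1-(x-μ)ν) dF(x)`, as an extended real number in `[-∞,∞)`:
the value is `⊥ = -∞` when the integrand equals `-∞` on a non-`F`-null set or when
its (necessarily negative, for `F` supported in `(-∞,1]` with finite mean) part fails
to be integrable. -/
def LL (F : Measure ℝ) (μ ν : ℝ) : EReal :=
  if Integrable (fun x => Real.log (1 - (x - μ) * ν)) F ∧ F {x | 1 - (x - μ) * ν ≤ 0} = 0
  then ((∫ x, Real.log (1 - (x - μ) * ν) ∂F : ℝ) : EReal)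
  else ⊥

/-- `D̃_inf(F,μ) = sup_{0 ≤ ν ≤ 1/(1-μ)} L(ν;F,μ)`. -/
def Dtilde (F : Measure ℝ) (μ : ℝ) : EReal :=
  ⨆ ν ∈ Set.Icc (0 : ℝ) (1 - μ)⁻¹, LL F μ ν

/-- The moment generating function of `F` is finite in a neighborhood of the origin. -/
def MGFNearZero (F : Measure ℝ) : Prop :=
  ∃ ε > (0 : ℝ), ∀ l : ℝ, |l| < ε → Integrable (fun x => Real.exp (l * x)) F

/-- Fenchel–Legendre transform `Λ*(x) = sup_λ {λx - log ∫ e^{λu} dF(u)}` of the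
logarithmic moment generating function of `F`. -/
def Legendre (F : Measure ℝ) (x : ℝ) : EReal :=
  ⨆ l : ℝ, ((l * x : ℝ) : EReal) -
    ENNReal.log (∫⁻ y, ENNReal.ofReal (Real.exp (l * y)) ∂F)

/-- Empirical distribution `F̂_t = (1/t) ∑_{i<t} δ_{X_i}`. -/
def empMeas {Ω : Type*} [MeasurableSpace Ω] (X : ℕ → Ω → ℝ) (t : ℕ) (ω : Ω) : Measure ℝ :=
  (t : ℝ≥0∞)⁻¹ • ∑ i ∈ Finset.range t, Measure.dirac (X i ω)

/-- Empirical mean `μ̂_t = (1/t) ∑_{i<t} X_i`. -/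
def empMean {Ω : Type*} (X : ℕ → Ω → ℝ) (t : ℕ) (ω : Ω) : ℝ :=
  (∑ i ∈ Finset.range t, X i ω) / t

/-! Since `E[1/Y] ≤ 1` is finite, `Y > 0` almost surely. Bernoulli's inequality
`z ^ p ≤ 1 + p (z - 1)` for `z ≥ 0`, `p ∈ [0,1]`, applied to `z = 1/Y`, `p = -λ` gives
`E[Y^λ] ≤ 1 - λ (E[1/Y] - 1) ≤ 1`; applied to `z = Y`, `p = λ` it gives
`E[Y^λ] ≤ (1 - λ) + λ E[Y]`, and `E[Y] = 1 - (E(F) - μ) ν* ≤ (1 - E(F))/(1 - μ)`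
because `ν* ≤ 1/(1-μ)`. -/
section InvOfReal

variable {α : Type*} [MeasurableSpace α] {P : Measure α} {f : α → ℝ}

lemma ae_pos_of_lintegral_inv_ofReal_ne_top (hf : AEMeasurable f P)
    (h : ∫⁻ x, (ENNReal.ofReal (f x))⁻¹ ∂P ≠ ∞) : ∀ᵐ x ∂P, 0 < f x := by
  have hg : AEMeasurable (fun x => (ENNReal.ofReal (f x))⁻¹) P := hf.ennreal_ofReal.inv
  filter_upwards [ae_lt_top' hg h] with x hx
  rwa [ENNReal.inv_lt_top, ENNReal.ofReal_pos] at hx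

lemma inv_ae_eq_toReal_inv_ofReal (hf : AEMeasurable f P)
    (h : ∫⁻ x, (ENNReal.ofReal (f x))⁻¹ ∂P ≠ ∞) :
    (fun x => (f x)⁻¹) =ᵐ[P] fun x => ((ENNReal.ofReal (f x))⁻¹).toReal := by
  filter_upwards [ae_pos_of_lintegral_inv_ofReal_ne_top hf h] with x hx
  rw [ENNReal.toReal_inv, ENNReal.toReal_ofReal hx.le]

lemma integrable_inv_of_lintegral_inv_ofReal_ne_top (hf : AEMeasurable f P)
    (h : ∫⁻ x, (ENNReal.ofReal (f x))⁻¹ ∂P ≠ ∞) : Integrable (fun x => (f x)⁻¹) P :=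
  (integrable_toReal_of_lintegral_ne_top hf.ennreal_ofReal.inv h).congr
    (inv_ae_eq_toReal_inv_ofReal hf h).symm

lemma integral_inv_eq_toReal_lintegral_inv_ofReal (hf : AEMeasurable f P)
    (h : ∫⁻ x, (ENNReal.ofReal (f x))⁻¹ ∂P ≠ ∞) :
    ∫ x, (f x)⁻¹ ∂P = (∫⁻ x, (ENNReal.ofReal (f x))⁻¹ ∂P).toReal := by
  have hg : AEMeasurable (fun x => (ENNReal.ofReal (f x))⁻¹) P := hf.ennreal_ofReal.inv
  rw [integral_congr_ae (inv_ae_eq_toReal_inv_ofReal hf h), integral_toReal hg (ae_lt_top' hg h)]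

end InvOfReal

lemma rpow_le_one_add_mul_sub_one {y p : ℝ} (hy : 0 ≤ y) (hp0 : 0 ≤ p) (hp1 : p ≤ 1) :
    y ^ p ≤ 1 + p * (y - 1) := by
  simpa using rpow_one_add_le_one_add_mul_self (s := y - 1) (by linarith) hp0 hp1

lemma integral_rpow_le_one_add_mul {α : Type*} [MeasurableSpace α] {P : Measure α}
    [IsProbabilityMeasure P] {Z : α → ℝ} (hZ : Integrable Z P) (hZ0 : 0 ≤ᵐ[P] Z) {p : ℝ}
    (hp0 : 0 ≤ p) (hp1 : p ≤ 1) :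
    ∫ x, Z x ^ p ∂P ≤ 1 + p * (∫ x, Z x ∂P - 1) := by
  have hZsub : Integrable (fun x => Z x - 1) P := hZ.sub (integrable_const 1)
  have hbound : Integrable (fun x => 1 + p * (Z x - 1)) P :=
    (integrable_const 1).add (hZsub.const_mul p)
  have hle : ∀ᵐ x ∂P, Z x ^ p ≤ 1 + p * (Z x - 1) := by
    filter_upwards [hZ0] with x hx using rpow_le_one_add_mul_sub_one hx hp0 hp1
  have hint : Integrable (fun x => Z x ^ p) P := by
    refine hbound.mono' (hZ.aemeasurable.pow_const p).aestronglyMeasurable ?_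
    filter_upwards [hZ0, hle] with x hx hxle
    rwa [Real.norm_of_nonneg (Real.rpow_nonneg hx p)]
  calc ∫ x, Z x ^ p ∂P ≤ ∫ x, 1 + p * (Z x - 1) ∂P := integral_mono_ae hint hbound hle
    _ = 1 + p * (∫ x, Z x ∂P - 1) := by
      rw [integral_add (integrable_const 1) (hZsub.const_mul p), integral_const_mul,
        integral_sub hZ (integrable_const 1)]
      simp

lemma one_sub_mul_le_div_one_sub {m μ ν : ℝ} (hm : m ≤ μ) (hμ : μ < 1) (hν : ν ≤ (1 - μ)⁻¹) :
    1 - (m - μ) * ν ≤ (1 - m) / (1 - μ) := by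
  have h1μ : 0 < 1 - μ := by linarith
  have : (μ - m) * ν ≤ (μ - m) * (1 - μ)⁻¹ := mul_le_mul_of_nonneg_left hν (by linarith)
  rw [div_eq_mul_inv, show (1 - m) * (1 - μ)⁻¹ = 1 + (μ - m) * (1 - μ)⁻¹ by
    field_simp; ring]
  linarith

theorem stmt14_general (F : Measure ℝ) [IsProbabilityMeasure F]
    (hint : Integrable (fun x : ℝ => x) F) (μ : ℝ) (hEF : ∫ x, x ∂F ≤ μ) (hμ : μ < 1)
    (ν' : ℝ) (hmem : ν' ∈ Set.Icc (0 : ℝ) (1 - μ)⁻¹)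
    (hinv : ∫⁻ x, (ENNReal.ofReal (1 - (x - μ) * ν'))⁻¹ ∂F ≤ 1) :
    (∀ l ∈ Set.Icc (-1 : ℝ) 0, ∫ x, (1 - (x - μ) * ν') ^ l ∂F ≤ 1) ∧
    (∀ l ∈ Set.Ioc (0 : ℝ) 1,
      ∫ x, (1 - (x - μ) * ν') ^ l ∂F ≤ (1 - ∫ x, x ∂F) / (1 - μ)) := by
  set Y : ℝ → ℝ := fun x => 1 - (x - μ) * ν'
  have hY : AEMeasurable Y F := by fun_prop
  have hfin : ∫⁻ x, (ENNReal.ofReal (Y x))⁻¹ ∂F ≠ ∞ :=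
    ne_top_of_le_ne_top ENNReal.one_ne_top hinv
  have hYpos : ∀ᵐ x ∂F, 0 < Y x := ae_pos_of_lintegral_inv_ofReal_ne_top hY hfin
  refine ⟨fun l ⟨hl1, hl0⟩ => ?_, fun l ⟨hl0, hl1⟩ => ?_⟩
  · have hEinv : ∫ x, (Y x)⁻¹ ∂F ≤ 1 := by
      rw [integral_inv_eq_toReal_lintegral_inv_ofReal hY hfin]
      exact ENNReal.toReal_le_of_le_ofReal zero_le_one (by simpa using hinv)
    have hYl : ∀ᵐ x ∂F, Y x ^ l = (Y x)⁻¹ ^ (-l) := by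
      filter_upwards [hYpos] with x hx
      rw [Real.inv_rpow hx.le, Real.rpow_neg hx.le, inv_inv]
    have hbern := integral_rpow_le_one_add_mul
      (integrable_inv_of_lintegral_inv_ofReal_ne_top hY hfin)
      (hYpos.mono fun x hx => (inv_pos.2 hx).le) (neg_nonneg.2 hl0) (by linarith)
    rw [integral_congr_ae hYl]
    nlinarith [mul_nonneg (neg_nonneg.2 hl0) (sub_nonneg.2 hEinv)]
  · have hshift : Integrable (fun x : ℝ => (x - μ) * ν') F :=
      (hint.sub (integrable_const μ)).mul_const ν'
    have hEY : ∫ x, Y x ∂F = 1 - (∫ x, x ∂F - μ) * ν' := by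
      rw [integral_sub (integrable_const 1) hshift, integral_mul_const,
        integral_sub hint (integrable_const μ)]
      simp
    have hmean : ∫ x, Y x ∂F ≤ (1 - ∫ x, x ∂F) / (1 - μ) :=
      hEY ▸ one_sub_mul_le_div_one_sub hEF hμ hmem.2
    have hone : 1 ≤ (1 - ∫ x, x ∂F) / (1 - μ) := by
      rw [le_div_iff₀ (by linarith)]; linarith
    have hYint : Integrable Y F := (integrable_const 1).sub hshift
    have hbern := integral_rpow_le_one_add_mul hYint (hYpos.mono fun x hx => hx.le) hl0.le hl1
    show ∫ x, Y x ^ l ∂F ≤ _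
    nlinarith [mul_le_mul_of_nonneg_left hmean hl0.le,
      mul_le_mul_of_nonneg_left hone (by linarith : 0 ≤ 1 - l)]

/-- Let `F` be supported in `(-∞,1]` with finite mean,
`E(F) ≤ μ < 1`, and let `ν* ∈ [0,1/(1-μ)]` satisfy `∫ 1/(1-(x-μ)ν*) dF ≤ 1`.
With `Y = 1-(X-μ)ν*`: `E[Y^λ] ≤ 1` for `λ ∈ [-1,0]`, and
`E[Y^λ] ≤ (1-E(F))/(1-μ)` for `λ ∈ (0,1]`. -/
theorem stmt14 (F : Measure ℝ) [IsProbabilityMeasure F] (hsupp : F (Set.Ioi 1) = 0)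
    (hint : Integrable (fun x : ℝ => x) F) (μ : ℝ) (hEF : ∫ x, x ∂F ≤ μ) (hμ : μ < 1)
    (ν' : ℝ) (hmem : ν' ∈ Set.Icc (0 : ℝ) (1 - μ)⁻¹)
    (hinv : ∫⁻ x, (ENNReal.ofReal (1 - (x - μ) * ν'))⁻¹ ∂F ≤ 1) :
    (∀ l ∈ Set.Icc (-1 : ℝ) 0, ∫ x, (1 - (x - μ) * ν') ^ l ∂F ≤ 1) ∧
    (∀ l ∈ Set.Ioc (0 : ℝ) 1,
      ∫ x, (1 - (x - μ) * ν') ^ l ∂F ≤ (1 - ∫ x, x ∂F) / (1 - μ)) :=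
  stmt14_general F hint μ hEF hμ ν' hmem hinv
end
end

section
/- Let μ < 1 and μ̃ < 1 be real numbers, let F be a probability measure supported in (-∞,1] with finite mean satisfying E(F) ≥ μ̃, let a ≤ min{0, μ}, and set A = (−∞, a). Then for every ν ∈ [0, 1/(1−μ)]: 0 ≤ ∫_A log( (1−(x−μ)ν)/(1−(a−μ)ν) ) dF(x) ≤ F(A)·log( (1−μ̃)/F(A) ), where the right-hand side is interpreted as 0 when F(A) = 0. -/
/-! On `A = (-∞, a)` the integrand is `log g` with `g(x) = (1 - (x-μ)ν)/(1 - (a-μ)ν) ≥ 1`,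
which gives nonnegativity. Jensen's inequality for the concave `log` bounds the integral by
`F(A) log (∫_A g dF / F(A))`. Since `F` lives on `(-∞, 1]`, `∫_A x dF ≥ E(F) - F(Aᶜ)`, and as
`g` is affine and decreasing this yields `∫_A g dF ≤ 1 - E(F) ≤ 1 - μ̃`. -/

open MeasureTheory ProbabilityTheory Set Filter
open scoped ENNReal NNReal Classical BoundedContinuousFunction

open Real

theorem setIntegral_log_le_measureReal_mul_log {α : Type*} [MeasurableSpace α] {m : Measure α}
    {s : Set α} {f : α → ℝ} (hs : m s ≠ 0) (hs' : m s ≠ ∞) (hf : IntegrableOn f s m)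
    (h1 : ∀ᵐ x ∂m.restrict s, 1 ≤ f x) :
    ∫ x in s, log (f x) ∂m ≤ m.real s * log ((∫ x in s, f x ∂m) / m.real s) := by
  have hm : 0 < m.real s := ENNReal.toReal_pos hs hs'
  have hlog : IntegrableOn (fun x => log (f x)) s m := by
    refine hf.mono' (measurable_log.comp_aemeasurable hf.aemeasurable).aestronglyMeasurable ?_
    filter_upwards [h1] with x hx
    rw [norm_eq_abs, abs_of_nonneg (log_nonneg hx)]
    exact log_le_self (by linarith)
  have hconc : ConcaveOn ℝ (Ici 1) log :=
    strictConcaveOn_log_Ioi.concaveOn.subset (Ici_subset_Ioi.2 one_pos) (convex_Ici 1)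
  have hjensen := hconc.le_map_set_average
    (continuousOn_log.mono fun x hx => (one_pos.trans_le hx).ne') isClosed_Ici hs hs' h1 hf hlog
  rw [setAverage_eq, setAverage_eq, smul_eq_mul, smul_eq_mul, inv_mul_eq_div, inv_mul_eq_div,
    div_le_iff₀ hm] at hjensen
  linarith

theorem integral_sub_le_setIntegral_of_ae_le_one {α : Type*} [MeasurableSpace α] {m : Measure α}
    [IsProbabilityMeasure m] {f : α → ℝ} {t : Set α} (hf : Integrable f m)
    (hle : ∀ᵐ x ∂m, f x ≤ 1) (ht : MeasurableSet t) :
    ∫ x, f x ∂m - (1 - m.real t) ≤ ∫ x in t, f x ∂m := by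
  have hcompl : ∫ x in tᶜ, f x ∂m ≤ m.real tᶜ := by
    calc ∫ x in tᶜ, f x ∂m ≤ ∫ _ in tᶜ, (1 : ℝ) ∂m :=
          integral_mono_ae hf.restrict (integrable_const 1) (ae_restrict_of_ae hle)
      _ = m.real tᶜ := by simp
  rw [measureReal_compl ht, probReal_univ] at hcompl
  linarith [integral_add_compl ht hf]

theorem mul_le_one_of_nonneg_of_le_inv {ν b : ℝ} (hν0 : 0 ≤ ν) (hν : ν ≤ b⁻¹) : ν * b ≤ 1 := by
  rcases le_or_gt b 0 with hb | hb
  · exact (mul_nonpos_of_nonneg_of_nonpos hν0 hb).trans zero_le_one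
  · simpa [inv_mul_cancel₀ hb.ne'] using mul_le_mul_of_nonneg_right hν hb.le

theorem one_le_one_sub_mul_div_one_sub_mul {μ ν a x : ℝ} (hν0 : 0 ≤ ν) (haμ : a ≤ μ)
    (hx : x < a) : 1 ≤ (1 - (x - μ) * ν) / (1 - (a - μ) * ν) :=
  (one_le_div (by nlinarith)).2 (by nlinarith)

section SupportedInIicOne

variable {F : Measure ℝ} [IsProbabilityMeasure F]

theorem measureReal_Iio_le_one_sub_integral (hle : ∀ᵐ x ∂F, x ≤ 1)
    (hint : Integrable (fun x => x) F) {a : ℝ} (ha : a ≤ 0) :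
    F.real (Iio a) ≤ 1 - ∫ x, x ∂F := by
  have hlow := integral_sub_le_setIntegral_of_ae_le_one hint hle (measurableSet_Iio (a := a))
  have hup : ∫ x in Iio a, x ∂F ≤ F.real (Iio a) * a := by
    calc ∫ x in Iio a, x ∂F ≤ ∫ _ in Iio a, a ∂F :=
          setIntegral_mono_on hint.integrableOn (integrable_const a).integrableOn measurableSet_Iio
            fun x hx => le_of_lt hx
      _ = F.real (Iio a) * a := by rw [setIntegral_const, smul_eq_mul]
  linarith [mul_nonpos_of_nonneg_of_nonpos (measureReal_nonneg (μ := F) (s := Iio a)) ha]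

theorem setIntegral_Iio_one_sub_mul_div_le (hle : ∀ᵐ x ∂F, x ≤ 1)
    (hint : Integrable (fun x => x) F) {μ ν a : ℝ} (hν0 : 0 ≤ ν) (hν : ν * (1 - μ) ≤ 1)
    (ha0 : a ≤ 0) (haμ : a ≤ μ) :
    ∫ x in Iio a, (1 - (x - μ) * ν) / (1 - (a - μ) * ν) ∂F ≤ 1 - ∫ x, x ∂F := by
  have hlow := integral_sub_le_setIntegral_of_ae_le_one hint hle (measurableSet_Iio (a := a))
  have hmass := measureReal_Iio_le_one_sub_integral hle hint ha0
  have hlin : ∫ x in Iio a, (1 - (x - μ) * ν) ∂F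
      = F.real (Iio a) * (1 + μ * ν) - (∫ x in Iio a, x ∂F) * ν := by
    simp_rw [show ∀ x : ℝ, 1 - (x - μ) * ν = (1 + μ * ν) - x * ν from fun x => by ring]
    rw [integral_sub (integrable_const _).integrableOn (hint.integrableOn.mul_const ν),
      integral_mul_const, setIntegral_const, smul_eq_mul]
  rw [integral_div, div_le_iff₀' (by nlinarith), hlin]
  -- the slack is `(1 - E - p)(1 - ν(1-μ)) - aν(1 - E) + ν(∫_A x - (E - 1 + p))`, `p = F(A)`
  nlinarith [mul_nonneg (sub_nonneg.2 hmass) (sub_nonneg.2 hν),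
    mul_nonneg (mul_nonneg (neg_nonneg.2 ha0) hν0) (measureReal_nonneg.trans hmass),
    mul_nonneg hν0 (sub_nonneg.2 hlow)]

end SupportedInIicOne

theorem stmt16_general (μ μt : ℝ)
    (F : Measure ℝ) [IsProbabilityMeasure F] (hsupp : F (Set.Ioi 1) = 0)
    (hint : Integrable (fun x : ℝ => x) F) (hEF : μt ≤ ∫ x, x ∂F)
    (a : ℝ) (ha : a ≤ min 0 μ) :
    ∀ ν ∈ Set.Icc (0 : ℝ) (1 - μ)⁻¹,
      0 ≤ ∫ x in Set.Iio a, Real.log ((1 - (x - μ) * ν) / (1 - (a - μ) * ν)) ∂F ∧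
      ∫ x in Set.Iio a, Real.log ((1 - (x - μ) * ν) / (1 - (a - μ) * ν)) ∂F
        ≤ (F (Set.Iio a)).toReal * Real.log ((1 - μt) / (F (Set.Iio a)).toReal) := by
  rintro ν ⟨hν0, hν⟩
  obtain ⟨ha0, haμ⟩ := le_min_iff.mp ha
  have hle : ∀ᵐ x ∂F, x ≤ 1 := by
    simp_rw [ae_iff, not_le]
    exact hsupp
  have hg : ∀ x ∈ Iio a, 1 ≤ (1 - (x - μ) * ν) / (1 - (a - μ) * ν) := fun x hx =>
    one_le_one_sub_mul_div_one_sub_mul hν0 haμ hx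
  refine ⟨setIntegral_nonneg measurableSet_Iio fun x hx => log_nonneg (hg x hx), ?_⟩
  rw [← measureReal_def]
  rcases eq_or_ne (F (Iio a)) 0 with hA | hA
  · simp [Measure.restrict_eq_zero.mpr hA, measureReal_def, hA]
  have hp : 0 < F.real (Iio a) := ENNReal.toReal_pos hA (measure_ne_top F _)
  have hgint : IntegrableOn (fun x => (1 - (x - μ) * ν) / (1 - (a - μ) * ν)) (Iio a) F :=
    ((integrable_const 1).sub ((hint.sub (integrable_const μ)).mul_const ν)).div_const _
      |>.integrableOn
  have hmass : F.real (Iio a) ≤ ∫ x in Iio a, (1 - (x - μ) * ν) / (1 - (a - μ) * ν) ∂F := by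
    simpa using setIntegral_mono_on (integrable_const 1).integrableOn hgint measurableSet_Iio hg
  calc _ ≤ F.real (Iio a) * log ((∫ x in Iio a, (1 - (x - μ) * ν) / (1 - (a - μ) * ν) ∂F)
          / F.real (Iio a)) :=
        setIntegral_log_le_measureReal_mul_log hA (measure_ne_top F _) hgint
          ((ae_restrict_iff' measurableSet_Iio).2 (ae_of_all _ hg))
    _ ≤ F.real (Iio a) * log ((1 - μt) / F.real (Iio a)) := by
        gcongr
        · exact div_pos (hp.trans_le hmass) hp
        · exact (setIntegral_Iio_one_sub_mul_div_le hle hint hν0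
            (mul_le_one_of_nonneg_of_le_inv hν0 hν) ha0 haμ).trans (by linarith)

/-- Let `μ, μ̃ < 1`, let `F` be a probability measure supported in
`(-∞,1]` with finite mean `E(F) ≥ μ̃`, let `a ≤ min{0,μ}` and `A = (-∞,a)`. Then for
every `ν ∈ [0,1/(1-μ)]`:
`0 ≤ ∫_A log((1-(x-μ)ν)/(1-(a-μ)ν)) dF ≤ F(A)·log((1-μ̃)/F(A))`
(the right-hand side being `0` when `F(A) = 0`). -/
theorem stmt16 (μ μt : ℝ) (hμ : μ < 1) (hμt : μt < 1)
    (F : Measure ℝ) [IsProbabilityMeasure F] (hsupp : F (Set.Ioi 1) = 0)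
    (hint : Integrable (fun x : ℝ => x) F) (hEF : μt ≤ ∫ x, x ∂F)
    (a : ℝ) (ha : a ≤ min 0 μ) :
    ∀ ν ∈ Set.Icc (0 : ℝ) (1 - μ)⁻¹,
      0 ≤ ∫ x in Set.Iio a, Real.log ((1 - (x - μ) * ν) / (1 - (a - μ) * ν)) ∂F ∧
      ∫ x in Set.Iio a, Real.log ((1 - (x - μ) * ν) / (1 - (a - μ) * ν)) ∂F
        ≤ (F (Set.Iio a)).toReal * Real.log ((1 - μt) / (F (Set.Iio a)).toReal) :=
  stmt16_general μ μt F hsupp hint hEF a ha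
end

section
/- Let F be a probability measure supported in (-∞,1] with finite mean and let μ satisfy E(F) ≤ μ < 1. Then the supremum defining D̃_inf(F,μ) is attained: there exists ν* ∈ [0, 1/(1−μ)] with L(ν*;F,μ) = D̃_inf(F,μ). Moreover, if F is not the point mass at μ, then this maximizer is unique. -/
open MeasureTheory ProbabilityTheory Set Filter
open scoped ENNReal NNReal Classical BoundedContinuousFunction

/-!
Where `1 - (x - μ) ν > 0` and `|ν| ≤ B`, `log (1 - (x - μ) ν) ≤ -(x - μ) ν ≤ |x - μ| B =: U x`,
and `U` is integrable because `F` has a finite mean. Hence `L(ν) = ∫ U - ∫⁻ d_ν` for the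
nonnegative deficit `d_ν = U - log (1 - (x - μ) ν)`, set to `∞` where the argument of the
logarithm is `≤ 0` (matching `L = -∞` there). Each `d_ν(x)` is continuous in `ν`, so by Fatou's
lemma `ν ↦ ∫⁻ d_ν` is lower semicontinuous and `L` is upper semicontinuous: it attains its
supremum on the compact interval `[0, 1/(1-μ)]`.

The supremum is at least `L(0) = 0`, so maximizers have finite value. Since
`ν ↦ log (1 - (x - μ) ν)` is strictly concave for `x ≠ μ`, two distinct maximizers would
give a strictly larger value at their midpoint unless `F` is concentrated at `μ`.
-/

open scoped Topology

noncomputable def logDeficit (c t : ℝ) : ℝ≥0∞ :=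
  if 0 < t then ENNReal.ofReal (c - Real.log t) else ⊤

theorem continuous_logDeficit (c : ℝ) : Continuous (logDeficit c) := by
  refine continuous_iff_continuousAt.2 fun t => ?_
  rcases lt_trichotomy t 0 with ht | rfl | ht
  · have : logDeficit c =ᶠ[𝓝 t] fun _ => ⊤ := by
      filter_upwards [Iio_mem_nhds ht] with s (hs : s < 0)
      simp [logDeficit, hs.le]
    exact continuousAt_const.congr this.symm
  · rw [ContinuousAt, logDeficit, if_neg (lt_irrefl 0), ENNReal.tendsto_nhds_top_iff_nat]
    intro n
    filter_upwards [Iio_mem_nhds (Real.exp_pos (c - n))] with s hs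
    rw [logDeficit]
    split_ifs with h
    · have : Real.log s < c - n := (Real.log_lt_iff_lt_exp h).2 hs
      exact ENNReal.natCast_lt_ofReal.2 (by linarith)
    · exact ENNReal.natCast_lt_top n
  · have : logDeficit c =ᶠ[𝓝 t] fun s => ENNReal.ofReal (c - Real.log s) := by
      filter_upwards [Ioi_mem_nhds ht] with s (hs : 0 < s)
      simp [logDeficit, hs]
    refine ContinuousAt.congr ?_ this.symm
    exact ENNReal.continuous_ofReal.continuousAt.comp
      (continuousAt_const.sub (Real.continuousAt_log ht.ne'))

@[fun_prop]
theorem Measurable.logDeficit {α : Type*} [MeasurableSpace α] {c t : α → ℝ} (hc : Measurable c)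
    (ht : Measurable t) : Measurable fun x => logDeficit (c x) (t x) :=
  Measurable.ite (measurableSet_lt measurable_const ht) (by fun_prop) measurable_const

theorem lowerSemicontinuous_lintegral {α X : Type*} [MeasurableSpace α] [TopologicalSpace X]
    [FirstCountableTopology X] {m : Measure α} {f : X → α → ℝ≥0∞}
    (hf : ∀ a, LowerSemicontinuous (f · a)) (hmeas : ∀ x, AEMeasurable (f x) m) :
    LowerSemicontinuous fun x => ∫⁻ a, f x a ∂m :=
  lowerSemicontinuous_iff_le_liminf.2 fun x =>
    (lintegral_mono fun a => (hf a).le_liminf x).trans (lintegral_liminf_le' hmeas)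

theorem continuous_coe_ereal_sub_coe_ennreal (c : ℝ) :
    Continuous fun t : ℝ≥0∞ => (c : EReal) - t := by
  refine continuous_iff_continuousAt.2 fun t => ?_
  exact (EReal.continuousAt_add (p := ((c : EReal), -(t : EReal))) (Or.inl (EReal.coe_ne_top c))
    (Or.inl (EReal.coe_ne_bot c))).comp (f := fun t : ℝ≥0∞ => ((c : EReal), -(t : EReal)))
      (continuous_const.prodMk (continuous_neg.comp continuous_coe_ennreal_ereal)).continuousAt

theorem log_add_log_div_two_lt {p q : ℝ} (hp : 0 < p) (hq : 0 < q) (hpq : p ≠ q) :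
    (Real.log p + Real.log q) / 2 < Real.log ((p + q) / 2) := by
  have := strictConcaveOn_log_Ioi.2 hp hq hpq (by norm_num : (0 : ℝ) < 1 / 2)
    (by norm_num : (0 : ℝ) < 1 / 2) (by norm_num)
  simp only [smul_eq_mul] at this
  calc (Real.log p + Real.log q) / 2 = 1 / 2 * Real.log p + 1 / 2 * Real.log q := by ring
    _ < Real.log (1 / 2 * p + 1 / 2 * q) := this
    _ = Real.log ((p + q) / 2) := by ring_nf

theorem log_add_log_div_two_le {p q : ℝ} (hp : 0 < p) (hq : 0 < q) :
    (Real.log p + Real.log q) / 2 ≤ Real.log ((p + q) / 2) := by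
  rcases eq_or_ne p q with rfl | hpq
  · simp
  · exact (log_add_log_div_two_lt hp hq hpq).le

theorem log_add_div_two_le_max {p q : ℝ} (hp : 0 < p) (hq : 0 < q) :
    Real.log ((p + q) / 2) ≤ max (Real.log p) (Real.log q) := by
  rcases le_total p q with h | h
  · exact (Real.log_le_log (by positivity) (by linarith)).trans (le_max_right _ _)
  · exact (Real.log_le_log (by positivity) (by linarith)).trans (le_max_left _ _)

theorem MeasureTheory.Measure.eq_dirac_of_measure_compl_singleton {α : Type*} [MeasurableSpace α]
    [MeasurableSingletonClass α] {m : Measure α} [IsProbabilityMeasure m] {a : α}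
    (h : m {a}ᶜ = 0) : m = Measure.dirac a := by
  have hae : (id : α → α) =ᵐ[m] fun _ => a := by
    filter_upwards [measure_eq_zero_iff_ae_notMem.1 h] with x hx
    simpa using hx
  rw [← Measure.map_id (μ := m), Measure.map_congr hae, Measure.map_const, measure_univ, one_smul]

section LL

variable {F : Measure ℝ} {μ ν B : ℝ}

theorem LL_eq_ite : LL F μ ν =
    if Integrable (fun x => Real.log (1 - (x - μ) * ν)) F ∧ ∀ᵐ x ∂F, 0 < 1 - (x - μ) * ν
    then ((∫ x, Real.log (1 - (x - μ) * ν) ∂F : ℝ) : EReal) else ⊥ := by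
  simp only [LL, ae_iff, not_lt]

theorem LL_zero [IsProbabilityMeasure F] : LL F μ 0 = 0 := by
  simp [LL_eq_ite]

theorem log_one_sub_mul_le (hν : |ν| ≤ B) {x : ℝ} (hx : 0 < 1 - (x - μ) * ν) :
    Real.log (1 - (x - μ) * ν) ≤ |x - μ| * B :=
  calc Real.log (1 - (x - μ) * ν) ≤ -((x - μ) * ν) := by linarith [Real.log_le_sub_one_of_pos hx]
    _ ≤ |x - μ| * |ν| := by rw [← abs_mul]; exact neg_le_abs _
    _ ≤ |x - μ| * B := by gcongr

theorem LL_eq_sub_lintegral [IsFiniteMeasure F] (hint : Integrable (fun x : ℝ => x) F)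
    (hν : |ν| ≤ B) :
    LL F μ ν = ((∫ x, |x - μ| * B ∂F : ℝ) : EReal) -
      ((∫⁻ x, logDeficit (|x - μ| * B) (1 - (x - μ) * ν) ∂F : ℝ≥0∞) : EReal) := by
  set U : ℝ → ℝ := fun x => |x - μ| * B
  set f : ℝ → ℝ := fun x => Real.log (1 - (x - μ) * ν)
  have hU : Integrable U F := ((hint.sub (integrable_const μ)).abs).mul_const B
  have hdef (x : ℝ) (hx : 0 < 1 - (x - μ) * ν) :
      logDeficit (U x) (1 - (x - μ) * ν) = ENNReal.ofReal (U x - f x) := if_pos hx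
  have hnn (x : ℝ) (hx : 0 < 1 - (x - μ) * ν) : 0 ≤ U x - f x :=
    sub_nonneg.2 (log_one_sub_mul_le hν hx)
  rw [LL_eq_ite]
  split_ifs with h
  · obtain ⟨hfi, hpos⟩ : Integrable f F ∧ _ := h
    rw [lintegral_congr_ae (hpos.mono hdef),
      ← ofReal_integral_eq_lintegral_ofReal (f := fun x => U x - f x) (hU.sub hfi) (hpos.mono hnn),
      EReal.coe_ennreal_ofReal, max_eq_left (integral_nonneg_of_ae (hpos.mono hnn)),
      integral_sub hU hfi, ← EReal.coe_sub, sub_sub_cancel]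
  · suffices ∫⁻ x, logDeficit (U x) (1 - (x - μ) * ν) ∂F = ⊤ by
      rw [this, EReal.coe_ennreal_top, EReal.sub_top]
    by_contra hfin
    have hpos : ∀ᵐ x ∂F, 0 < 1 - (x - μ) * ν := by
      filter_upwards [ae_lt_top' (by fun_prop) hfin] with x hx
      by_contra hx'
      simp [logDeficit, hx'] at hx
    have hdiff : Integrable (fun x => U x - f x) F := by
      refine ⟨by fun_prop, ?_⟩
      rw [hasFiniteIntegral_iff_ofReal (hpos.mono hnn), ← lintegral_congr_ae (hpos.mono hdef)]
      exact lt_top_iff_ne_top.2 hfin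
    exact h ⟨(hU.sub hdiff).congr (ae_of_all _ fun x => sub_sub_cancel _ _), hpos⟩

theorem upperSemicontinuous_LL [IsFiniteMeasure F] (hint : Integrable (fun x : ℝ => x) F) :
    UpperSemicontinuous (LL F μ) := by
  intro ν₀
  set B := |ν₀| + 1
  have hG : LowerSemicontinuous fun ν => ∫⁻ x, logDeficit (|x - μ| * B) (1 - (x - μ) * ν) ∂F :=
    lowerSemicontinuous_lintegral
      (fun x => ((continuous_logDeficit _).comp (by fun_prop)).lowerSemicontinuous)
      (fun ν => by fun_prop)
  have hanti : Antitone fun t : ℝ≥0∞ => ((∫ x, |x - μ| * B ∂F : ℝ) : EReal) - t :=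
    fun _ _ h => EReal.sub_le_sub le_rfl (EReal.coe_ennreal_le_coe_ennreal_iff.2 h)
  have hν₀ : |ν₀| < B := lt_add_one _
  have heq : ∀ᶠ ν in 𝓝 ν₀, LL F μ ν = ((∫ x, |x - μ| * B ∂F : ℝ) : EReal) -
      ((∫⁻ x, logDeficit (|x - μ| * B) (1 - (x - μ) * ν) ∂F : ℝ≥0∞) : EReal) := by
    filter_upwards [Ioo_mem_nhds (neg_lt_of_abs_lt hν₀) (lt_of_abs_lt hν₀)] with ν hν
    exact LL_eq_sub_lintegral hint (abs_le.2 ⟨hν.1.le, hν.2.le⟩)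
  intro y hy
  filter_upwards [(continuous_coe_ereal_sub_coe_ennreal _).comp_lowerSemicontinuous_antitone
    hG hanti ν₀ y (heq.self_of_nhds.symm.trans_lt hy), heq] with ν hν hν'
  rwa [hν']

theorem exists_LL_eq_biSup [IsFiniteMeasure F] (hint : Integrable (fun x : ℝ => x) F)
    {s : Set ℝ} (hs : IsCompact s) (hne : s.Nonempty) :
    ∃ ν ∈ s, LL F μ ν = ⨆ ν' ∈ s, LL F μ ν' := by
  obtain ⟨ν, hν, hmax⟩ :=
    ((upperSemicontinuous_LL hint).upperSemicontinuousOn s).exists_isMaxOn hne hs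
  exact ⟨ν, hν, le_antisymm (le_biSup _ hν) (iSup₂_le hmax)⟩

theorem integrable_and_ae_pos_of_LL_ne_bot (h : LL F μ ν ≠ ⊥) :
    Integrable (fun x => Real.log (1 - (x - μ) * ν)) F ∧ ∀ᵐ x ∂F, 0 < 1 - (x - μ) * ν := by
  by_contra h'
  rw [LL_eq_ite, if_neg h'] at h
  exact h rfl

theorem LL_lt_LL_midpoint [IsFiniteMeasure F] (hF : F {μ}ᶜ ≠ 0) {a b : ℝ} (hab : a ≠ b)
    (ha : LL F μ a ≠ ⊥) (hb : LL F μ b ≠ ⊥) :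
    min (LL F μ a) (LL F μ b) < LL F μ ((a + b) / 2) := by
  set f : ℝ → ℝ → ℝ := fun ν x => Real.log (1 - (x - μ) * ν)
  obtain ⟨hfa, hpa⟩ := integrable_and_ae_pos_of_LL_ne_bot ha
  obtain ⟨hfb, hpb⟩ := integrable_and_ae_pos_of_LL_ne_bot hb
  set m := (a + b) / 2
  have hsplit (x : ℝ) : 1 - (x - μ) * m = ((1 - (x - μ) * a) + (1 - (x - μ) * b)) / 2 := by ring
  have hpm : ∀ᵐ x ∂F, 0 < 1 - (x - μ) * m := by
    filter_upwards [hpa, hpb] with x h1 h2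
    rw [hsplit]; positivity
  have hlow : ∀ᵐ x ∂F, (f a x + f b x) / 2 ≤ f m x := by
    filter_upwards [hpa, hpb] with x h1 h2
    simpa only [f, hsplit] using log_add_log_div_two_le h1 h2
  have hup : ∀ᵐ x ∂F, f m x ≤ (f a ⊔ f b) x := by
    filter_upwards [hpa, hpb] with x h1 h2
    simpa only [f, hsplit, Pi.sup_apply] using log_add_div_two_le_max h1 h2
  have hstrict : ∀ᵐ x ∂F, x ≠ μ → (f a x + f b x) / 2 < f m x := by
    filter_upwards [hpa, hpb] with x h1 h2 hx
    have hne : 1 - (x - μ) * a ≠ 1 - (x - μ) * b := fun h =>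
      hab (mul_left_cancel₀ (sub_ne_zero.2 hx) (by linarith))
    simpa only [f, hsplit] using log_add_log_div_two_lt h1 h2 hne
  have havg : Integrable (fun x => (f a x + f b x) / 2) F := (hfa.add hfb).div_const 2
  have hfm : Integrable (f m) F := integrable_of_le_of_le (by fun_prop) hlow hup havg (hfa.sup hfb)
  have hgap : ∫ x, (f a x + f b x) / 2 ∂F < ∫ x, f m x ∂F := by
    rw [← sub_pos, ← integral_sub hfm havg, integral_pos_iff_support_of_nonneg_ae
      (hlow.mono fun x hx => sub_nonneg.2 hx) (hfm.sub havg)]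
    refine (pos_iff_ne_zero.2 hF).trans_le (measure_mono_ae ?_)
    filter_upwards [hstrict] with x hx hxμ
    exact (sub_pos.2 (hx hxμ)).ne'
  rw [integral_div, integral_add hfa hfb] at hgap
  rw [LL_eq_ite, if_pos ⟨hfa, hpa⟩, LL_eq_ite, if_pos ⟨hfb, hpb⟩, LL_eq_ite, if_pos ⟨hfm, hpm⟩]
  rw [min_lt_iff, EReal.coe_lt_coe_iff, EReal.coe_lt_coe_iff]
  by_contra! h
  linarith [h.1, h.2]

theorem eq_of_LL_eq_biSup [IsProbabilityMeasure F] (hF : F ≠ Measure.dirac μ) {s : Set ℝ}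
    (hs : Convex ℝ s) (h0 : 0 ∈ s) {a b : ℝ} (ha : a ∈ s) (hb : b ∈ s)
    (hLa : LL F μ a = ⨆ ν ∈ s, LL F μ ν) (hLb : LL F μ b = ⨆ ν ∈ s, LL F μ ν) : a = b := by
  by_contra hab
  have hsup_ne_bot : (⨆ ν ∈ s, LL F μ ν) ≠ ⊥ :=
    ne_bot_of_le_ne_bot (by simp [LL_zero]) (le_biSup (LL F μ) h0)
  have hmid : (a + b) / 2 ∈ s := by
    convert hs ha hb (by norm_num : (0 : ℝ) ≤ 1 / 2) (by norm_num : (0 : ℝ) ≤ 1 / 2) (by norm_num)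
      using 1
    simp only [smul_eq_mul]; ring
  have := LL_lt_LL_midpoint (mt Measure.eq_dirac_of_measure_compl_singleton hF) hab
    (hLa ▸ hsup_ne_bot) (hLb ▸ hsup_ne_bot)
  rw [hLa, hLb, min_self] at this
  exact (le_biSup (LL F μ) hmid).not_gt this

end LL

theorem stmt19_general (F : Measure ℝ) [IsProbabilityMeasure F]
    (hint : Integrable (fun x : ℝ => x) F) (μ : ℝ) (hμ : μ < 1) :
    (∃ ν' ∈ Set.Icc (0 : ℝ) (1 - μ)⁻¹, LL F μ ν' = Dtilde F μ) ∧
    (F ≠ Measure.dirac μ →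
      ∃! ν' : ℝ, ν' ∈ Set.Icc (0 : ℝ) (1 - μ)⁻¹ ∧ LL F μ ν' = Dtilde F μ) := by
  have hB : (0 : ℝ) ≤ (1 - μ)⁻¹ := inv_nonneg.2 (by linarith)
  obtain ⟨ν, hν, hmax⟩ := exists_LL_eq_biSup (μ := μ) hint isCompact_Icc (nonempty_Icc.2 hB)
  refine ⟨⟨ν, hν, hmax⟩, fun hF => ⟨ν, ⟨hν, hmax⟩, fun ν' hν' => ?_⟩⟩
  exact eq_of_LL_eq_biSup hF (convex_Icc _ _) (left_mem_Icc.2 hB) hν'.1 hν hν'.2 hmax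

/-- For `F` supported in `(-∞,1]` with finite mean and
`E(F) ≤ μ < 1`, the supremum defining `D̃_inf(F,μ)` is attained on `[0,1/(1-μ)]`;
moreover if `F` is not the point mass at `μ` then the maximizer is unique. -/
theorem stmt19 (F : Measure ℝ) [IsProbabilityMeasure F] (hsupp : F (Set.Ioi 1) = 0)
    (hint : Integrable (fun x : ℝ => x) F) (μ : ℝ) (hEF : ∫ x, x ∂F ≤ μ) (hμ : μ < 1) :
    (∃ ν' ∈ Set.Icc (0 : ℝ) (1 - μ)⁻¹, LL F μ ν' = Dtilde F μ) ∧
    (F ≠ Measure.dirac μ →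
      ∃! ν' : ℝ, ν' ∈ Set.Icc (0 : ℝ) (1 - μ)⁻¹ ∧ LL F μ ν' = Dtilde F μ) :=
  stmt19_general F hint μ hμ
end
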